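/- arXiv:2602.14303 — 9 statements merged into one kernel-verified Lean document; each statement's English description precedes it below -/
import Mathlib

section
/- For all real parameters λ > 0 with λ ≠ 1 and φ > 0, the SMPtW density integrates to one: ∫₀^∞ ((log λ) φ y^(φ−1) exp((log λ)·exp(−y^φ) − y^φ))/(λ − 1) dy = 1. -/
open Real MeasureTheory Filter Topology

/-- The SMPtW probability density function with parameters `lam > 0`, `lam ≠ 1`, `phi > 0`. -/
noncomputable def smptwPDF (lam phi y : ℝ) : ℝ :=
  (Real.log lam * phi * y ^ (phi - 1) *
    Real.exp (Real.log lam * Real.exp (-(y ^ phi)) - y ^ phi)) / (lam - 1)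

/-!
The density is the derivative of the distribution function
`F(y) = (λ - λ ^ exp (-y ^ φ)) / (λ - 1)`, which increases from `F(0) = 0` to `F(∞) = 1`;
since the density is nonnegative, the improper fundamental theorem of calculus gives the value
`1 - 0`.
-/

/-- As in `smptwPDF`, `λ ^ t` is written `exp (log λ * t)`. -/
noncomputable def smptwCDF (lam phi y : ℝ) : ℝ :=
  (lam - Real.exp (Real.log lam * Real.exp (-(y ^ phi)))) / (lam - 1)

theorem Real.log_div_sub_one_nonneg {x : ℝ} (hx : 0 ≤ x) : 0 ≤ Real.log x / (x - 1) := by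
  rcases le_total x 1 with h | h
  · exact div_nonneg_of_nonpos (Real.log_nonpos hx h) (by linarith)
  · exact div_nonneg (Real.log_nonneg h) (by linarith)

theorem smptwPDF_nonneg {lam phi y : ℝ} (hlam : 0 ≤ lam) (hphi : 0 ≤ phi) (hy : 0 ≤ y) :
    0 ≤ smptwPDF lam phi y := by
  have key : 0 ≤ Real.log lam / (lam - 1) * phi * y ^ (phi - 1) *
      Real.exp (Real.log lam * Real.exp (-(y ^ phi)) - y ^ phi) := by
    have := Real.log_div_sub_one_nonneg hlam
    positivity
  calc 0 ≤ _ := key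
    _ = smptwPDF lam phi y := by unfold smptwPDF; ring

theorem hasDerivAt_smptwCDF (lam phi : ℝ) {y : ℝ} (hy : y ≠ 0) :
    HasDerivAt (smptwCDF lam phi) (smptwPDF lam phi y) y := by
  have hpow : HasDerivAt (fun y : ℝ => y ^ phi) (phi * y ^ (phi - 1)) y :=
    Real.hasDerivAt_rpow_const (Or.inl hy)
  refine (((hpow.neg.exp.const_mul (Real.log lam)).exp.const_sub lam).div_const
    (lam - 1)).congr_deriv ?_
  simp only [smptwPDF, Pi.neg_apply, Real.exp_sub, Real.exp_neg]
  field_simp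

theorem continuous_smptwCDF (lam : ℝ) {phi : ℝ} (hphi : 0 ≤ phi) :
    Continuous (smptwCDF lam phi) := by
  unfold smptwCDF
  have := Real.continuous_rpow_const hphi
  fun_prop

theorem smptwCDF_zero {lam phi : ℝ} (hlam : 0 < lam) (hphi : phi ≠ 0) :
    smptwCDF lam phi 0 = 0 := by
  simp [smptwCDF, Real.zero_rpow hphi, Real.exp_log hlam]

theorem tendsto_smptwCDF_atTop (lam : ℝ) {phi : ℝ} (hlam1 : lam ≠ 1) (hphi : 0 < phi) :
    Tendsto (smptwCDF lam phi) atTop (𝓝 1) := by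
  have hexp : Tendsto (fun y : ℝ => Real.exp (-(y ^ phi))) atTop (𝓝 0) :=
    Real.tendsto_exp_atBot.comp (tendsto_neg_atTop_atBot.comp (tendsto_rpow_atTop hphi))
  have hlim : Tendsto (smptwCDF lam phi) atTop
      (𝓝 ((lam - Real.exp (Real.log lam * 0)) / (lam - 1))) :=
    (((hexp.const_mul (Real.log lam)).rexp).const_sub lam).div_const (lam - 1)
  rwa [mul_zero, Real.exp_zero, div_self (sub_ne_zero.2 hlam1)] at hlim

/-- the SMPtW density integrates to one over `(0, ∞)`. -/
theorem smptw_pdf_integrates_to_one (lam phi : ℝ)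
    (hlam : 0 < lam) (hlam1 : lam ≠ 1) (hphi : 0 < phi) :
    ∫ y in Set.Ioi (0 : ℝ), smptwPDF lam phi y = 1 := by
  rw [integral_Ioi_of_hasDerivAt_of_nonneg
      (continuous_smptwCDF lam hphi.le).continuousWithinAt
      (fun y hy => hasDerivAt_smptwCDF lam phi (ne_of_gt hy))
      (fun y hy => smptwPDF_nonneg hlam.le hphi.le (le_of_lt hy))
      (tendsto_smptwCDF_atTop lam hlam1 hphi),
    smptwCDF_zero hlam hphi.ne', sub_zero]
end

section
/- For every real s > −1 and every real c, ∫₀^∞ t^s · exp(−t) · exp(c·exp(−t)) dt = Γ(s + 1) · Σ_{j=0}^∞ c^j / (j! · (j + 1)^(s+1)), where Γ is the Gamma function; in particular both the integral and the series converge. -/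
/-!
Expanding `exp (c e^{-t}) = ∑ c^j e^{-jt} / j!` turns the integrand into the Dirichlet-type series
`∑ (c^j / j!) t^s e^{-(j+1)t}`, and `∫₀^∞ t^s e^{-rt} dt = Γ(s+1) / r^(s+1)`. Integrating
termwise is legitimate because the same computation with `|c|` shows that the integrals of the
absolute values of the terms are summable.
-/

open Real MeasureTheory Set Nat

theorem integrableOn_rpow_mul_exp_neg_mul {s r : ℝ} (hs : -1 < s) (hr : 0 < r) :
    IntegrableOn (fun t : ℝ => t ^ s * exp (-(r * t))) (Ioi 0) := by
  simpa only [rpow_one, neg_mul] using integrableOn_rpow_mul_exp_neg_mul_rpow hs one_pos hr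

theorem integral_rpow_mul_exp_neg_mul {s r : ℝ} (hs : -1 < s) (hr : 0 < r) :
    ∫ t in Ioi 0, t ^ s * exp (-(r * t)) = Gamma (s + 1) / r ^ (s + 1) := by
  have := integral_rpow_mul_exp_neg_mul_Ioi (a := s + 1) (by linarith) hr
  rw [add_sub_cancel_right] at this
  rw [this, div_rpow zero_le_one hr.le, one_rpow, one_div, inv_mul_eq_div]

/-- A real-variable analogue of `hasSum_mellin`. -/
theorem hasSum_setIntegral_rpow_mul_of_hasSum_exp {ι : Type*} [Countable ι] {a p : ι → ℝ}
    {F : ℝ → ℝ} {s : ℝ} (hs : -1 < s) (hp : ∀ i, 0 < p i)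
    (hF : ∀ t ∈ Ioi (0 : ℝ), HasSum (fun i => a i * exp (-(p i * t))) (F t))
    (h_sum : Summable fun i => |a i| / p i ^ (s + 1)) :
    HasSum (fun i => Gamma (s + 1) * (a i / p i ^ (s + 1))) (∫ t in Ioi 0, t ^ s * F t) := by
  set G : ι → ℝ → ℝ := fun i t => a i * (t ^ s * exp (-(p i * t)))
  have hG_int (i : ι) : IntegrableOn (G i) (Ioi 0) :=
    (integrableOn_rpow_mul_exp_neg_mul hs (hp i)).const_mul (a i)
  have hG_integral (i : ι) : ∫ t in Ioi 0, G i t = Gamma (s + 1) * (a i / p i ^ (s + 1)) := by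
    rw [integral_const_mul, integral_rpow_mul_exp_neg_mul hs (hp i)]
    ring
  have hG_norm (i : ι) : ∫ t in Ioi 0, ‖G i t‖ = Gamma (s + 1) * (|a i| / p i ^ (s + 1)) := by
    calc ∫ t in Ioi 0, ‖G i t‖ = ∫ t in Ioi 0, |a i| * (t ^ s * exp (-(p i * t))) :=
          setIntegral_congr_fun measurableSet_Ioi fun t (ht : 0 < t) => by
            simp only [G, norm_mul, norm_eq_abs, abs_of_nonneg (rpow_nonneg ht.le s),
              abs_of_pos (exp_pos _)]
      _ = Gamma (s + 1) * (|a i| / p i ^ (s + 1)) := by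
          rw [integral_const_mul, integral_rpow_mul_exp_neg_mul hs (hp i)]
          ring
  have hG_tsum : ∀ t ∈ Ioi (0 : ℝ), ∑' i, G i t = t ^ s * F t := fun t ht => by
    simpa only [G, mul_left_comm (a _)] using ((hF t ht).mul_left (t ^ s)).tsum_eq
  rw [← setIntegral_congr_fun measurableSet_Ioi hG_tsum]
  simp_rw [← hG_integral]
  refine hasSum_integral_of_summable_integral_norm hG_int ?_
  simpa only [hG_norm] using h_sum.mul_left (Gamma (s + 1))

theorem hasSum_exp_neg_mul_exp_mul_exp_neg (c t : ℝ) :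
    HasSum (fun j : ℕ => c ^ j / j ! * exp (-((j + 1) * t))) (exp (-t) * exp (c * exp (-t))) := by
  have h : HasSum (fun j : ℕ => exp (-t) * ((c * exp (-t)) ^ j / j !))
      (exp (-t) * exp (c * exp (-t))) := by
    simpa only [← exp_eq_exp_ℝ] using
      (NormedSpace.expSeries_div_hasSum_exp (c * exp (-t))).mul_left (exp (-t))
  convert h using 2 with j
  rw [mul_pow, ← exp_nat_mul, mul_div_right_comm, mul_left_comm, ← mul_assoc, mul_assoc,
    ← exp_add]
  ring_nf

theorem summable_pow_div_factorial_mul_rpow {a : ℝ} (ha : 0 ≤ a) (c : ℝ) :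
    Summable fun j : ℕ => c ^ j / (j ! * ((j : ℝ) + 1) ^ a) := by
  refine (summable_pow_div_factorial |c|).of_norm_bounded fun j => ?_
  rw [norm_div, norm_pow, norm_eq_abs, norm_of_nonneg (by positivity)]
  gcongr
  exact le_mul_of_one_le_right (by positivity) (one_le_rpow (by simp) ha)

theorem integrableOn_rpow_mul_exp_neg_mul_exp_mul_exp_neg {s : ℝ} (hs : -1 < s) (c : ℝ) :
    IntegrableOn (fun t : ℝ => t ^ s * exp (-t) * exp (c * exp (-t))) (Ioi 0) := by
  have h := integrableOn_rpow_mul_exp_neg_mul hs one_pos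
  simp only [one_mul] at h
  refine h.mul_bdd (c := exp |c|) (by fun_prop : Continuous _).aestronglyMeasurable ?_
  filter_upwards [ae_restrict_mem measurableSet_Ioi] with t (ht : 0 < t)
  rw [norm_of_nonneg (exp_pos _).le, exp_le_exp]
  calc c * exp (-t) ≤ |c| * exp (-t) := by gcongr; exact le_abs_self c
    _ ≤ |c| := mul_le_of_le_one_right (abs_nonneg c) (exp_le_one_iff.2 (by linarith))

/-- for `s > −1` and any real `c`,
`∫₀^∞ t^s e^(−t) e^(c e^(−t)) dt = Γ(s+1) · Σ_{j≥0} c^j/(j!(j+1)^(s+1))`,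
and both the integral and the series converge. -/
theorem integral_rpow_exp_expexp (s c : ℝ) (hs : -1 < s) :
    IntegrableOn
      (fun t : ℝ => t ^ s * Real.exp (-t) * Real.exp (c * Real.exp (-t)))
      (Set.Ioi (0 : ℝ)) ∧
    Summable (fun j : ℕ =>
      c ^ j / ((j.factorial : ℝ) * ((j : ℝ) + 1) ^ (s + 1))) ∧
    ∫ t in Set.Ioi (0 : ℝ), t ^ s * Real.exp (-t) * Real.exp (c * Real.exp (-t)) =
      Real.Gamma (s + 1) *
        ∑' j : ℕ, c ^ j / ((j.factorial : ℝ) * ((j : ℝ) + 1) ^ (s + 1)) := by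
  have hs1 : 0 ≤ s + 1 := by linarith
  refine ⟨integrableOn_rpow_mul_exp_neg_mul_exp_mul_exp_neg hs c,
    summable_pow_div_factorial_mul_rpow hs1 c, ?_⟩
  have h_sum : Summable fun j : ℕ => |c ^ j / j !| / ((j : ℝ) + 1) ^ (s + 1) := by
    simpa only [abs_div, abs_pow, abs_of_nonneg (cast_nonneg (α := ℝ) _), div_div] using
      summable_pow_div_factorial_mul_rpow hs1 |c|
  have h := hasSum_setIntegral_rpow_mul_of_hasSum_exp hs (fun j => by positivity)
    (fun t _ => hasSum_exp_neg_mul_exp_mul_exp_neg c t) h_sum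
  simp only [div_div, ← mul_assoc] at h
  rw [← h.tsum_eq, tsum_mul_left]
end

section
/- For all real parameters λ > 0 with λ ≠ 1 and φ > 1, and every real t, the characteristic function of the SMPtW distribution satisfies ∫₀^∞ exp(i·t·y) · ((log λ) φ y^(φ−1) exp((log λ)·exp(−y^φ) − y^φ))/(λ − 1) dy = Σ_{r=0}^∞ ((i·t)^r / r!) · ((log λ)/(λ − 1)) · Γ(r/φ + 1) · Σ_{j=0}^∞ (log λ)^j / (j! · (j + 1)^(r/φ + 1)), where the integrand and series are complex-valued and i is the imaginary unit. -/
open Real MeasureTheory Complex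

/-!
Expanding `exp (i t y)` into its power series and integrating term by term reduces the
characteristic function to the moments `∫ y ^ r f(y) dy`. The interchange is legitimate because
`exp (|t| y) f(y)` is integrable: `f(y)` decays like `y ^ (φ - 1) exp (-y ^ φ)` and `φ > 1`.
The substitution `u = y ^ φ` turns the `r`-th moment into
`(log λ / (λ - 1)) ∫ u ^ (r / φ) exp (log λ · e⁻ᵘ - u) du`, and expanding `exp (log λ · e⁻ᵘ)` in
turn leaves the Gamma integrals `∫ u ^ a e^{-(j + 1) u} du = Γ(a + 1) / (j + 1) ^ (a + 1)`.
-/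

open Set
open scoped Nat

theorem hasSum_integral_pow_div_factorial_mul {𝕜 α : Type*} [RCLike 𝕜] [MeasurableSpace α]
    {μ : Measure α} {g h : α → 𝕜} (hg : AEStronglyMeasurable g μ)
    (hh : AEStronglyMeasurable h μ)
    (hgh : Integrable (fun x ↦ Real.exp ‖g x‖ * ‖h x‖) μ) :
    HasSum (fun n : ℕ ↦ ∫ x, g x ^ n / n ! * h x ∂μ)
      (∫ x, NormedSpace.exp (g x) * h x ∂μ) := by
  refine hasSum_integral_of_dominated_convergence (fun n x ↦ ‖g x‖ ^ n / n ! * ‖h x‖)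
    (fun n ↦ by fun_prop) (fun n ↦ ae_of_all _ fun x ↦ ?_)
    (ae_of_all _ fun x ↦ (Real.summable_pow_div_factorial _).mul_right _) ?_
    (ae_of_all _ fun x ↦ (NormedSpace.expSeries_div_hasSum_exp (g x)).mul_right (h x))
  · simp [norm_pow]
  · convert hgh using 3 with x
    rw [tsum_mul_right, Real.exp_eq_exp_ℝ, NormedSpace.exp_eq_tsum_div]

theorem integral_rpow_mul_exp_mul_exp_neg_sub {a : ℝ} (ha : -1 < a) (L : ℝ) :
    ∫ u in Ioi (0 : ℝ), u ^ a * Real.exp (L * Real.exp (-u) - u) =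
      Real.Gamma (a + 1) * ∑' j : ℕ, L ^ j / (j ! * ((j : ℝ) + 1) ^ (a + 1)) := by
  have hint : IntegrableOn
      (fun u : ℝ ↦ Real.exp ‖L * Real.exp (-u)‖ * ‖u ^ a * Real.exp (-u)‖) (Ioi 0) := by
    refine (((Real.GammaIntegral_convergent (s := a + 1) (by linarith)).const_mul
      (Real.exp |L|))).mono' (by fun_prop) (ae_restrict_of_forall_mem measurableSet_Ioi
        fun u (hu : 0 < u) ↦ ?_)
    have hLu : |L| * Real.exp (-u) ≤ |L| :=
      mul_le_of_le_one_right (abs_nonneg L) (Real.exp_le_one_iff.2 (by linarith))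
    simp only [norm_mul, Real.norm_eq_abs, Real.abs_exp,
      abs_of_nonneg (Real.rpow_nonneg hu.le a), add_sub_cancel_right]
    rw [mul_comm (Real.exp (-u))]
    gcongr
  have hseries := hasSum_integral_pow_div_factorial_mul (by fun_prop) (by fun_prop) hint
  rw [← Real.exp_eq_exp_ℝ] at hseries
  have hterm (j : ℕ) (u : ℝ) : (L * Real.exp (-u)) ^ j / j ! * (u ^ a * Real.exp (-u)) =
      L ^ j / j ! * (u ^ (a + 1 - 1) * Real.exp (-(((j : ℝ) + 1) * u))) := by
    rw [add_sub_cancel_right, show -(((j : ℝ) + 1) * u) = j * (-u) + -u by ring, Real.exp_add,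
      Real.exp_nat_mul]
    ring
  calc ∫ u in Ioi (0 : ℝ), u ^ a * Real.exp (L * Real.exp (-u) - u)
      = ∫ u in Ioi (0 : ℝ), Real.exp (L * Real.exp (-u)) * (u ^ a * Real.exp (-u)) := by
        simp only [sub_eq_add_neg, Real.exp_add, mul_left_comm]
    _ = ∑' j : ℕ, Real.Gamma (a + 1) * (L ^ j / (j ! * ((j : ℝ) + 1) ^ (a + 1))) := by
        rw [← hseries.tsum_eq]
        refine tsum_congr fun j ↦ ?_
        simp only [hterm, integral_const_mul]
        rw [Real.integral_rpow_mul_exp_neg_mul_Ioi (by linarith) (by positivity), Real.div_rpow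
          zero_le_one (by positivity), Real.one_rpow]
        field_simp
    _ = _ := tsum_mul_left

theorem smptwPDF_eq (lam phi y : ℝ) :
    smptwPDF lam phi y = Real.log lam / (lam - 1) *
      (phi * y ^ (phi - 1) * Real.exp (Real.log lam * Real.exp (-(y ^ phi)) - y ^ phi)) := by
  rw [smptwPDF]
  ring

@[fun_prop]
theorem measurable_smptwPDF (lam phi : ℝ) : Measurable (smptwPDF lam phi) := by
  unfold smptwPDF
  fun_prop

theorem integral_rpow_mul_smptwPDF {phi s : ℝ} (hphi : 0 < phi) (hs : -phi < s) (lam : ℝ) :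
    ∫ y in Ioi (0 : ℝ), y ^ s * smptwPDF lam phi y =
      Real.log lam / (lam - 1) * Real.Gamma (s / phi + 1) *
        ∑' j : ℕ, Real.log lam ^ j / (j ! * ((j : ℝ) + 1) ^ (s / phi + 1)) := by
  have hs' : -1 < s / phi := by rw [lt_div_iff₀ hphi]; linarith
  rw [mul_assoc, ← integral_rpow_mul_exp_mul_exp_neg_sub hs', ← integral_const_mul,
    ← integral_comp_rpow_Ioi (fun u ↦ Real.log lam / (lam - 1) *
      (u ^ (s / phi) * Real.exp (Real.log lam * Real.exp (-u) - u))) hphi.ne']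
  refine setIntegral_congr_fun measurableSet_Ioi fun y (hy : 0 < y) ↦ ?_
  rw [smul_eq_mul, abs_of_pos hphi, smptwPDF_eq, ← Real.rpow_mul hy.le,
    mul_div_cancel₀ _ hphi.ne']
  ring

theorem exists_mul_le_rpow_div_two_add {p : ℝ} (hp : 1 < p) (b : ℝ) :
    ∃ C, ∀ y, 0 ≤ y → b * y ≤ y ^ p / 2 + C := by
  -- past `(2 |b|) ^ (1 / (p - 1))` the power wins; below it `b * y` is bounded
  refine ⟨|b| * (2 * |b|) ^ (p - 1)⁻¹, fun y hy ↦ ?_⟩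
  have hby : b * y ≤ |b| * y := mul_le_mul_of_nonneg_right (le_abs_self b) hy
  rcases le_or_gt ((2 * |b|) ^ (p - 1)⁻¹) y with hY | hY
  · have h2b : 2 * |b| ≤ y ^ (p - 1) :=
      (Real.rpow_inv_le_iff_of_pos (by positivity) hy (by linarith)).1 hY
    have hyp : y ^ p = y ^ (p - 1) * y := by
      rw [← Real.rpow_add_one' hy (by linarith), sub_add_cancel]
    have : 0 ≤ |b| * (2 * |b|) ^ (p - 1)⁻¹ := by positivity
    nlinarith
  · have : 0 ≤ y ^ p / 2 := by positivity
    nlinarith [abs_nonneg b]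

theorem integrableOn_exp_mul_mul_rpow_mul_exp_neg_rpow {s p : ℝ} (hs : -1 < s) (hp : 1 < p)
    (b : ℝ) :
    IntegrableOn (fun y : ℝ ↦ Real.exp (b * y) * (y ^ s * Real.exp (-(y ^ p)))) (Ioi 0) := by
  obtain ⟨C, hC⟩ := exists_mul_le_rpow_div_two_add hp b
  refine ((integrableOn_rpow_mul_exp_neg_mul_rpow hs (by linarith) one_half_pos).const_mul
    (Real.exp C)).mono' (by fun_prop)
    (ae_restrict_of_forall_mem measurableSet_Ioi fun y (hy : 0 < y) ↦ ?_)
  rw [Real.norm_of_nonneg (by positivity)]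
  calc Real.exp (b * y) * (y ^ s * Real.exp (-(y ^ p)))
      = y ^ s * Real.exp (b * y - y ^ p) := by rw [sub_eq_add_neg, Real.exp_add]; ring
    _ ≤ y ^ s * Real.exp (C + -(1 / 2) * y ^ p) := by gcongr; linarith [hC y hy.le]
    _ = Real.exp C * (y ^ s * Real.exp (-(1 / 2) * y ^ p)) := by rw [Real.exp_add]; ring

theorem abs_smptwPDF_le (lam phi : ℝ) {y : ℝ} (hy : 0 ≤ y) :
    |smptwPDF lam phi y| ≤ |Real.log lam / (lam - 1)| * |phi| * Real.exp |Real.log lam| *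
      (y ^ (phi - 1) * Real.exp (-(y ^ phi))) := by
  have hL : Real.log lam * Real.exp (-(y ^ phi)) ≤ |Real.log lam| :=
    calc Real.log lam * Real.exp (-(y ^ phi)) ≤ |Real.log lam| * Real.exp (-(y ^ phi)) := by
          gcongr; exact le_abs_self _
      _ ≤ |Real.log lam| :=
          mul_le_of_le_one_right (abs_nonneg _) (Real.exp_le_one_iff.2 (by simp; positivity))
  have hexp : Real.exp (Real.log lam * Real.exp (-(y ^ phi)) - y ^ phi) ≤
      Real.exp |Real.log lam| * Real.exp (-(y ^ phi)) := by
    rw [← Real.exp_add]; gcongr; linarith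
  rw [smptwPDF_eq, abs_mul, abs_mul, abs_mul, abs_of_nonneg (Real.rpow_nonneg hy _),
    Real.abs_exp]
  calc |Real.log lam / (lam - 1)| * (|phi| * y ^ (phi - 1) *
        Real.exp (Real.log lam * Real.exp (-(y ^ phi)) - y ^ phi))
      ≤ |Real.log lam / (lam - 1)| * (|phi| * y ^ (phi - 1) *
        (Real.exp |Real.log lam| * Real.exp (-(y ^ phi)))) := by gcongr
    _ = _ := by ring

theorem smptw_characteristic_function_general (lam phi : ℝ)
    (hphi : 1 < phi) (t : ℝ) :
    ∫ y in Set.Ioi (0 : ℝ),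
        Complex.exp (Complex.I * t * y) * (smptwPDF lam phi y : ℂ) =
      ∑' r : ℕ,
        ((Complex.I * t) ^ r / (r.factorial : ℂ)) *
          (((Real.log lam / (lam - 1)) * Real.Gamma ((r : ℝ) / phi + 1) *
            ∑' j : ℕ, (Real.log lam) ^ j /
              ((j.factorial : ℝ) * ((j : ℝ) + 1) ^ ((r : ℝ) / phi + 1)) : ℝ) : ℂ) := by
  have hint : IntegrableOn
      (fun y : ℝ ↦ Real.exp ‖Complex.I * t * y‖ * ‖(smptwPDF lam phi y : ℂ)‖) (Ioi 0) := by
    refine ((integrableOn_exp_mul_mul_rpow_mul_exp_neg_rpow (s := phi - 1) (by linarith) hphi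
      |t|).const_mul (|Real.log lam / (lam - 1)| * |phi| * Real.exp |Real.log lam|)).mono'
      (by fun_prop) (ae_restrict_of_forall_mem measurableSet_Ioi fun y (hy : 0 < y) ↦ ?_)
    simp only [norm_mul, Complex.norm_I, Complex.norm_real, Real.norm_eq_abs,
      Real.abs_exp, abs_abs, abs_of_pos hy, one_mul]
    rw [mul_left_comm]
    gcongr
    exact abs_smptwPDF_le lam phi hy.le
  have hseries := hasSum_integral_pow_div_factorial_mul (by fun_prop) (by fun_prop) hint
  rw [← Complex.exp_eq_exp_ℂ] at hseries
  rw [← hseries.tsum_eq]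
  refine tsum_congr fun r ↦ ?_
  rw [← integral_rpow_mul_smptwPDF (by linarith) (by linarith [r.cast_nonneg (α := ℝ)]),
    ← integral_complex_ofReal, ← integral_const_mul]
  refine setIntegral_congr_fun measurableSet_Ioi fun y _ ↦ ?_
  rw [Real.rpow_natCast]
  push_cast
  ring

/-- the characteristic function of the SMPtW distribution. -/
theorem smptw_characteristic_function (lam phi : ℝ)
    (hlam : 0 < lam) (hlam1 : lam ≠ 1) (hphi : 1 < phi) (t : ℝ) :
    ∫ y in Set.Ioi (0 : ℝ),
        Complex.exp (Complex.I * t * y) * (smptwPDF lam phi y : ℂ) =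
      ∑' r : ℕ,
        ((Complex.I * t) ^ r / (r.factorial : ℂ)) *
          (((Real.log lam / (lam - 1)) * Real.Gamma ((r : ℝ) / phi + 1) *
            ∑' j : ℕ, (Real.log lam) ^ j /
              ((j.factorial : ℝ) * ((j : ℝ) + 1) ^ ((r : ℝ) / phi + 1)) : ℝ) : ℂ) :=
  smptw_characteristic_function_general lam phi hphi t
end

section
/- For all real parameters λ > 0 with λ ≠ 1 and φ > 0, and every y > 0, the derivative at y of the SMPtW density f vanishes if and only if φ − 1 = φ · y^φ · ((log λ)·exp(−y^φ) + 1). -/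
open Real

lemma hasDerivAt_rpow_mul_exp_weibull (L phi : ℝ) {y : ℝ} (hy : 0 < y) :
    HasDerivAt (fun x => x ^ (phi - 1) * exp (L * exp (-(x ^ phi)) - x ^ phi))
      (y ^ (phi - 2) * exp (L * exp (-(y ^ phi)) - y ^ phi) *
        (phi - 1 - phi * y ^ phi * (L * exp (-(y ^ phi)) + 1))) y := by
  have hpow : HasDerivAt (fun x : ℝ => x ^ phi) (phi * y ^ (phi - 1)) y :=
    hasDerivAt_rpow_const (Or.inl hy.ne')
  have hpow' : HasDerivAt (fun x : ℝ => x ^ (phi - 1)) ((phi - 1) * y ^ (phi - 1 - 1)) y :=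
    hasDerivAt_rpow_const (Or.inl hy.ne')
  have hexp : HasDerivAt (fun x => exp (L * exp (-(x ^ phi)) - x ^ phi))
      (exp (L * exp (-(y ^ phi)) - y ^ phi) *
        (L * (exp (-(y ^ phi)) * -(phi * y ^ (phi - 1))) - phi * y ^ (phi - 1))) y :=
    ((hpow.neg.exp.const_mul L).sub hpow).exp
  have hsq : y ^ (phi - 1) * y ^ (phi - 1) = y ^ (phi - 2) * y ^ phi := by
    rw [← rpow_add hy, ← rpow_add hy]
    ring_nf
  refine (hpow'.mul hexp).congr_deriv ?_
  rw [show phi - 1 - 1 = phi - 2 by ring]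
  linear_combination (-phi * exp (L * exp (-(y ^ phi)) - y ^ phi) *
    (L * exp (-(y ^ phi)) + 1)) * hsq

lemma smptwPDF_eq_const_mul (lam phi : ℝ) :
    smptwPDF lam phi = fun x => log lam * phi / (lam - 1) *
      (x ^ (phi - 1) * exp (log lam * exp (-(x ^ phi)) - x ^ phi)) := by
  funext x
  rw [smptwPDF]
  ring

lemma hasDerivAt_smptwPDF (lam phi : ℝ) {y : ℝ} (hy : 0 < y) :
    HasDerivAt (smptwPDF lam phi)
      (log lam * phi / (lam - 1) * (y ^ (phi - 2) * exp (log lam * exp (-(y ^ phi)) - y ^ phi)) *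
        (phi - 1 - phi * y ^ phi * (log lam * exp (-(y ^ phi)) + 1))) y := by
  rw [smptwPDF_eq_const_mul, mul_assoc]
  exact (hasDerivAt_rpow_mul_exp_weibull (log lam) phi hy).const_mul _

/-- the derivative of the SMPtW density vanishes at `y > 0` iff
`φ − 1 = φ y^φ ((log λ) e^(−y^φ) + 1)`. -/
theorem smptw_mode_equation (lam phi : ℝ)
    (hlam : 0 < lam) (hlam1 : lam ≠ 1) (hphi : 0 < phi)
    (y : ℝ) (hy : 0 < y) :
    deriv (smptwPDF lam phi) y = 0 ↔
      phi - 1 = phi * y ^ phi * (Real.log lam * Real.exp (-(y ^ phi)) + 1) := by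
  have hconst : log lam * phi / (lam - 1) ≠ 0 :=
    div_ne_zero (mul_ne_zero (log_ne_zero_of_pos_of_ne_one hlam hlam1) hphi.ne')
      (sub_ne_zero.mpr hlam1)
  have hpos : 0 < y ^ (phi - 2) * exp (log lam * exp (-(y ^ phi)) - y ^ phi) := by positivity
  rw [(hasDerivAt_smptwPDF lam phi hy).deriv, mul_eq_zero, mul_eq_zero, sub_eq_zero]
  simp only [hconst, hpos.ne', false_or]
end

section
/- For all real parameters λ > 1 and φ > 1, there exists y > 0 satisfying the mode equation φ − 1 = φ · y^φ · ((log λ)·exp(−y^φ) + 1). -/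
open Real

/-- for `λ > 1` and `φ > 1`, the mode equation
`φ − 1 = φ y^φ ((log λ) e^(−y^φ) + 1)` has a solution `y > 0`. -/
theorem smptw_mode_exists (lam phi : ℝ) (hlam : 1 < lam) (hphi : 1 < phi) :
    ∃ y : ℝ, 0 < y ∧
      phi - 1 = phi * y ^ phi * (Real.log lam * Real.exp (-(y ^ phi)) + 1) := by
  set f : ℝ → ℝ := fun y => phi * y ^ phi * (Real.log lam * Real.exp (-(y ^ phi)) + 1)
    with hf
  have hphi0 : (0:ℝ) < phi := by linarith
  have hL : 0 < Real.log lam := Real.log_pos hlam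
  have hcont : ContinuousOn f (Set.Icc 0 1) := by
    have h1 : ContinuousOn (fun y : ℝ => y ^ phi) (Set.Icc 0 1) :=
      ContinuousOn.rpow_const continuousOn_id (fun x _ => Or.inr hphi0.le)
    exact ((continuousOn_const.mul h1).mul
      ((continuousOn_const.mul ((h1.neg).rexp)).add continuousOn_const))
  have hf0 : f 0 = 0 := by
    simp [hf, Real.zero_rpow (ne_of_gt hphi0)]
  have hf1 : phi ≤ f 1 := by
    have : f 1 = phi * (Real.log lam * Real.exp (-1) + 1) := by
      simp [hf]
    rw [this]
    nlinarith [mul_pos hL (Real.exp_pos (-1:ℝ))]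
  have hmem : (phi - 1) ∈ Set.Icc (f 0) (f 1) := by
    constructor
    · rw [hf0]; linarith
    · linarith
  obtain ⟨y, hy, hfy⟩ := intermediate_value_Icc (by norm_num : (0:ℝ) ≤ 1) hcont hmem
  refine ⟨y, ?_, hfy.symm⟩
  rcases hy.1.lt_or_eq with h | h
  · exact h
  · exfalso
    rw [← h] at hfy
    rw [hf0] at hfy
    linarith
end

section
/- For all real parameters λ > 1 and 0 < φ ≤ 1, the SMPtW density f(y) = ((log λ) φ y^(φ−1) exp((log λ)·exp(−y^φ) − y^φ))/(λ − 1) is strictly decreasing on (0, ∞). -/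
open Real

/-- for `λ > 1` and `0 < φ ≤ 1`, the SMPtW density is strictly
decreasing on `(0, ∞)`. -/
theorem smptw_pdf_strictAnti (lam phi : ℝ)
    (hlam : 1 < lam) (hphi0 : 0 < phi) (hphi1 : phi ≤ 1) :
    StrictAntiOn (smptwPDF lam phi) (Set.Ioi (0 : ℝ)) := by
  intro x hx y hy hxy
  simp only [Set.mem_Ioi] at hx hy
  have hlog : 0 < Real.log lam := Real.log_pos hlam
  have hden : 0 < lam - 1 := by linarith
  have hab : x ^ phi < y ^ phi := Real.rpow_lt_rpow hx.le hxy hphi0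
  -- exponential factor strictly decreases
  have hE : Real.exp (Real.log lam * Real.exp (-(y ^ phi)) - y ^ phi) <
      Real.exp (Real.log lam * Real.exp (-(x ^ phi)) - x ^ phi) := by
    apply Real.exp_lt_exp.mpr
    have : Real.exp (-(y ^ phi)) < Real.exp (-(x ^ phi)) := by
      apply Real.exp_lt_exp.mpr; linarith
    nlinarith
  -- power factor weakly decreases
  have hP : y ^ (phi - 1) ≤ x ^ (phi - 1) :=
    Real.rpow_le_rpow_of_nonpos hx hxy.le (by linarith)
  have hPy : 0 < y ^ (phi - 1) := Real.rpow_pos_of_pos hy _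
  have hPx : 0 < x ^ (phi - 1) := Real.rpow_pos_of_pos hx _
  have key : y ^ (phi - 1) * Real.exp (Real.log lam * Real.exp (-(y ^ phi)) - y ^ phi) <
      x ^ (phi - 1) * Real.exp (Real.log lam * Real.exp (-(x ^ phi)) - x ^ phi) := by
    exact mul_lt_mul' hP hE (Real.exp_pos _).le hPx
  unfold smptwPDF
  rw [div_lt_div_iff₀ hden hden]
  have hc : 0 < Real.log lam * phi := mul_pos hlog hphi0
  nlinarith [mul_lt_mul_of_pos_left key hc, mul_pos hc (mul_pos hPy (Real.exp_pos (Real.log lam * Real.exp (-(y ^ phi)) - y ^ phi)))]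
end

section
/- For all real parameters λ > 0 with λ ≠ 1 and φ > 0, and every real h > 0 with (φ − 1)·h + 1 > 0, the h-th power integral of the SMPtW density satisfies ∫₀^∞ f(y)^h dy = ((log λ)·φ/(λ − 1))^h · (1/φ) · Γ(((φ − 1)h + 1)/φ) · Σ_{j=0}^∞ (h·log λ)^j / j! · (h + j)^(−((φ − 1)h + 1)/φ), and in particular the integral and series converge. -/
open Real MeasureTheory

/-!
With `a = h log λ`, the power `f(y)^h` is a constant times
`y^q e^{-h y^φ} exp(a e^{-y^φ})`, `q = (φ - 1) h`. Expanding `exp(a e^{-y^φ})` as an exponential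
series gives terms `a^j / j! · y^q e^{-(h + j) y^φ}`, whose integrals are Gamma integrals
`Γ((q + 1)/φ) / (φ (h + j)^{(q + 1)/φ})`. The series may be integrated termwise by dominated
convergence, with the summable bound `|a|^j / j! · y^q e^{-h y^φ}`.
-/

open Set Nat

lemma hasSum_pow_div_factorial_mul_exp_neg (a t : ℝ) :
    HasSum (fun j : ℕ => a ^ j / j ! * exp (-(j * t))) (exp (a * exp (-t))) := by
  rw [congrFun exp_eq_exp_ℝ (a * exp (-t))]
  refine (NormedSpace.expSeries_div_hasSum_exp (a * exp (-t))).congr_fun fun j => ?_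
  rw [mul_pow, ← exp_nat_mul, neg_mul_eq_mul_neg]
  ring

lemma smptwPDF_coeff_nonneg {lam phi : ℝ} (hlam : 0 < lam) (hphi : 0 ≤ phi) :
    0 ≤ log lam * phi / (lam - 1) := by
  rcases le_total 1 lam with h1 | h1
  · exact div_nonneg (mul_nonneg (log_nonneg h1) hphi) (sub_nonneg.2 h1)
  · exact div_nonneg_of_nonpos (mul_nonpos_of_nonpos_of_nonneg (log_nonpos hlam.le h1) hphi)
      (sub_nonpos.2 h1)

section ExpOfExpIntegral

variable {a b p q : ℝ}

lemma integrableOn_rpow_mul_exp_neg_mul_rpow_mul_exp_exp (hq : -1 < q) (hp : 0 < p)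
    (hb : 0 < b) (a : ℝ) :
    IntegrableOn (fun y : ℝ => y ^ q * exp (-b * y ^ p) * exp (a * exp (-y ^ p))) (Ioi 0) := by
  refine ((integrableOn_rpow_mul_exp_neg_mul_rpow hq hp hb).mul_const (exp |a|)).mono'
    (by fun_prop) ?_
  filter_upwards [ae_restrict_mem measurableSet_Ioi] with y hy
  have hy : 0 ≤ y := le_of_lt hy
  rw [norm_mul, norm_of_nonneg (by positivity), norm_of_nonneg (exp_pos _).le]
  gcongr
  calc a * exp (-y ^ p) ≤ |a| * exp (-y ^ p) := by gcongr; exact le_abs_self a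
    _ ≤ |a| * 1 := by gcongr; exact exp_le_one_iff.2 (neg_nonpos.2 (by positivity))
    _ = |a| := mul_one _

theorem hasSum_integral_rpow_mul_exp_neg_mul_rpow_mul_exp_exp (hq : -1 < q) (hp : 0 < p)
    (hb : 0 < b) (a : ℝ) :
    HasSum (fun j : ℕ => 1 / p * Gamma ((q + 1) / p) * (a ^ j / j ! * (b + j) ^ (-((q + 1) / p))))
      (∫ y in Ioi 0, y ^ q * exp (-b * y ^ p) * exp (a * exp (-y ^ p))) := by
  have hbound_sum (y : ℝ) : HasSum (fun j : ℕ => |a| ^ j / j ! * (y ^ q * exp (-b * y ^ p)))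
      (exp |a| * (y ^ q * exp (-b * y ^ p))) := by
    rw [exp_eq_exp_ℝ]
    exact (NormedSpace.expSeries_div_hasSum_exp |a|).mul_right _
  have key := hasSum_integral_of_dominated_convergence (μ := volume.restrict (Ioi 0))
    (F := fun (j : ℕ) y => a ^ j / j ! * (y ^ q * exp (-(b + j) * y ^ p)))
    (f := fun y => y ^ q * exp (-b * y ^ p) * exp (a * exp (-y ^ p)))
    (fun j y => |a| ^ j / j ! * (y ^ q * exp (-b * y ^ p))) (fun j => by fun_prop)
    (fun j => ?bound) (.of_forall fun y => (hbound_sum y).summable) ?integrable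
    (.of_forall fun y => ?pointwise)
  case bound =>
    filter_upwards [ae_restrict_mem measurableSet_Ioi] with y hy
    have hy : 0 ≤ y := le_of_lt hy
    rw [norm_mul, norm_div, norm_pow, norm_natCast, norm_eq_abs,
      norm_of_nonneg (r := y ^ q * exp _) (by positivity)]
    gcongr
    nlinarith [rpow_nonneg hy p, (j.cast_nonneg : (0 : ℝ) ≤ j)]
  case integrable =>
    simp_rw [(hbound_sum _).tsum_eq]
    exact (integrableOn_rpow_mul_exp_neg_mul_rpow hq hp hb).const_mul _
  case pointwise =>
    refine ((hasSum_pow_div_factorial_mul_exp_neg a (y ^ p)).mul_left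
      (y ^ q * exp (-b * y ^ p))).congr_fun fun j => ?_
    rw [show -(b + j) * y ^ p = -b * y ^ p + -(j * y ^ p) by ring, exp_add]
    ring
  refine key.congr_fun fun j => ?_
  rw [integral_const_mul, integral_rpow_mul_exp_neg_mul_rpow hp hq (by positivity), neg_div]
  ring

end ExpOfExpIntegral

lemma smptwPDF_rpow_eq {lam phi y : ℝ} (hlam : 0 < lam) (hphi : 0 ≤ phi) (hy : 0 ≤ y) (h : ℝ) :
    smptwPDF lam phi y ^ h = (log lam * phi / (lam - 1)) ^ h *
      (y ^ ((phi - 1) * h) * exp (-h * y ^ phi) * exp (h * log lam * exp (-y ^ phi))) := by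
  have hsplit (u v : ℝ) :
      log lam * phi * u * v / (lam - 1) = (log lam * phi / (lam - 1)) * (u * v) := by ring
  rw [smptwPDF, hsplit, mul_rpow (smptwPDF_coeff_nonneg hlam hphi) (by positivity),
    mul_rpow (by positivity) (exp_pos _).le, ← rpow_mul hy, ← exp_mul, mul_assoc, ← exp_add]
  ring_nf

theorem smptw_renyi_power_integral_general (lam phi h : ℝ)
    (hlam : 0 < lam) (hphi : 0 < phi)
    (hh : 0 < h) (hexp : 0 < (phi - 1) * h + 1) :
    IntegrableOn (fun y : ℝ => smptwPDF lam phi y ^ h) (Set.Ioi (0 : ℝ)) ∧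
    Summable (fun j : ℕ =>
      (h * Real.log lam) ^ j / (j.factorial : ℝ) *
        (h + (j : ℝ)) ^ (-(((phi - 1) * h + 1) / phi))) ∧
    ∫ y in Set.Ioi (0 : ℝ), smptwPDF lam phi y ^ h =
      (Real.log lam * phi / (lam - 1)) ^ h * (1 / phi) *
        Real.Gamma (((phi - 1) * h + 1) / phi) *
        ∑' j : ℕ, (h * Real.log lam) ^ j / (j.factorial : ℝ) *
          (h + (j : ℝ)) ^ (-(((phi - 1) * h + 1) / phi)) := by
  have hq : -1 < (phi - 1) * h := by linarith
  have hpdf : EqOn (fun y => smptwPDF lam phi y ^ h) (fun y => (log lam * phi / (lam - 1)) ^ h *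
      (y ^ ((phi - 1) * h) * exp (-h * y ^ phi) * exp (h * log lam * exp (-y ^ phi)))) (Ioi 0) :=
    fun y hy => smptwPDF_rpow_eq hlam hphi.le (le_of_lt hy) h
  have hsum := hasSum_integral_rpow_mul_exp_neg_mul_rpow_mul_exp_exp hq hphi hh (h * log lam)
  have hGamma : 1 / phi * Gamma (((phi - 1) * h + 1) / phi) ≠ 0 :=
    (mul_pos (by positivity) (Gamma_pos_of_pos (div_pos hexp hphi))).ne'
  refine ⟨?_, (summable_mul_left_iff hGamma).1 hsum.summable, ?_⟩
  · exact IntegrableOn.congr_fun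
      ((integrableOn_rpow_mul_exp_neg_mul_rpow_mul_exp_exp hq hphi hh _).const_mul _)
      hpdf.symm measurableSet_Ioi
  · rw [setIntegral_congr_fun measurableSet_Ioi hpdf, integral_const_mul, ← hsum.tsum_eq,
      tsum_mul_left]
    ring

/-- the `h`-th power integral of the SMPtW density (the key ingredient
of the Rényi entropy), with convergence of the integral and of the series. -/
theorem smptw_renyi_power_integral (lam phi h : ℝ)
    (hlam : 0 < lam) (hlam1 : lam ≠ 1) (hphi : 0 < phi)
    (hh : 0 < h) (hexp : 0 < (phi - 1) * h + 1) :
    IntegrableOn (fun y : ℝ => smptwPDF lam phi y ^ h) (Set.Ioi (0 : ℝ)) ∧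
    Summable (fun j : ℕ =>
      (h * Real.log lam) ^ j / (j.factorial : ℝ) *
        (h + (j : ℝ)) ^ (-(((phi - 1) * h + 1) / phi))) ∧
    ∫ y in Set.Ioi (0 : ℝ), smptwPDF lam phi y ^ h =
      (Real.log lam * phi / (lam - 1)) ^ h * (1 / phi) *
        Real.Gamma (((phi - 1) * h + 1) / phi) *
        ∑' j : ℕ, (h * Real.log lam) ^ j / (j.factorial : ℝ) *
          (h + (j : ℝ)) ^ (-(((phi - 1) * h + 1) / phi)) :=
  smptw_renyi_power_integral_general lam phi h hlam hphi hh hexp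
end

section
/- For all real parameters λ > 0 with λ ≠ 1 and φ > 0, and every t > 0, the lower partial first moment of the SMPtW distribution satisfies ∫₀^t y · f(y) dy = ((log λ)/(λ − 1)) · Σ_{j=0}^∞ ( (log λ)^j / (j! · (j + 1)^(1 + 1/φ)) ) · ∫₀^{(j+1)·t^φ} v^(1/φ) · exp(−v) dv, where f is the SMPtW density. -/
open Real MeasureTheory

open Set Nat

theorem hasSum_intervalIntegral_mul_exp {g h : ℝ → ℝ} (hg : Continuous g) (hh : Continuous h)
    (a b : ℝ) :
    HasSum (fun j : ℕ ↦ ∫ x in a..b, g x * (h x ^ j / j !)) (∫ x in a..b, g x * exp (h x)) := by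
  obtain ⟨C, hC⟩ := (isCompact_uIcc (a := a) (b := b)).exists_bound_of_continuousOn hg.continuousOn
  obtain ⟨M, hM⟩ := (isCompact_uIcc (a := a) (b := b)).exists_bound_of_continuousOn hh.continuousOn
  refine intervalIntegral.hasSum_integral_of_dominated_convergence (fun j _ ↦ C * (M ^ j / j !))
    (fun j ↦ (hg.mul ((hh.pow j).div_const _)).aestronglyMeasurable) ?_ ?_
    intervalIntegrable_const ?_
  · refine fun j ↦ .of_forall fun x hx ↦ ?_
    have hx := uIoc_subset_uIcc hx
    rw [norm_mul, norm_div, norm_pow, RCLike.norm_natCast]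
    gcongr
    · exact (norm_nonneg _).trans (hC x hx)
    · exact hC x hx
    · exact hM x hx
  · exact .of_forall fun _ _ ↦ (Real.summable_pow_div_factorial M).mul_left C
  · refine .of_forall fun x _ ↦ ?_
    rw [exp_eq_exp_ℝ]
    exact (NormedSpace.expSeries_div_hasSum_exp (h x)).mul_left (g x)

theorem integral_rpow_mul_exp_neg_eq {phi c t : ℝ} (hphi : 0 < phi) (hc : 0 < c) (ht : 0 ≤ t) :
    ∫ v in (0 : ℝ)..c * t ^ phi, v ^ (1 / phi) * exp (-v) =
      c ^ (1 + 1 / phi) * ∫ y in (0 : ℝ)..t, phi * y ^ phi * exp (-(c * y ^ phi)) := by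
  have hderiv (y : ℝ) (hy : y ∈ Ioo (min 0 t) (max 0 t)) :
      HasDerivAt (fun y ↦ c * y ^ phi) (c * (phi * y ^ (phi - 1))) y := by
    rw [min_eq_left ht] at hy
    exact (Real.hasDerivAt_rpow_const (Or.inl hy.1.ne')).const_mul c
  have hderiv_nonneg (y : ℝ) (hy : y ∈ Ioo (min 0 t) (max 0 t)) :
      0 ≤ c * (phi * y ^ (phi - 1)) := by
    rw [min_eq_left ht] at hy
    have := hy.1
    positivity
  have hsubst := intervalIntegral.integral_comp_mul_deriv_of_deriv_nonneg
    (f := fun y ↦ c * y ^ phi) (g := fun v ↦ v ^ (1 / phi) * exp (-v))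
    (continuous_const.mul (Real.continuous_rpow_const hphi.le)).continuousOn hderiv hderiv_nonneg
  simp only [Function.comp_def, Real.zero_rpow hphi.ne', mul_zero] at hsubst
  rw [← hsubst, ← intervalIntegral.integral_const_mul]
  refine intervalIntegral.integral_congr_ae (.of_forall fun y hy ↦ ?_)
  have hy : 0 < y := (uIoc_of_le ht ▸ hy).1
  have hroot : (c * y ^ phi) ^ (1 / phi) = c ^ (1 / phi) * y := by
    rw [Real.mul_rpow hc.le (by positivity), ← Real.rpow_mul hy.le, mul_one_div_cancel hphi.ne',
      Real.rpow_one]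
  have hpow : y * y ^ (phi - 1) = y ^ phi := by
    rw [mul_comm, ← Real.rpow_add_one hy.ne']; ring_nf
  rw [hroot, Real.rpow_one_add' hc.le (by positivity)]
  linear_combination (c * c ^ (1 / phi) * phi * exp (-(c * y ^ phi))) * hpow

theorem mul_smptwPDF {lam phi y : ℝ} (hy : 0 < y) :
    y * smptwPDF lam phi y = Real.log lam / (lam - 1) * (phi * y ^ phi * exp (-y ^ phi)) *
      exp (Real.log lam * exp (-y ^ phi)) := by
  have hpow : y * y ^ (phi - 1) = y ^ phi := by
    rw [mul_comm, ← Real.rpow_add_one hy.ne']; ring_nf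
  rw [smptwPDF, sub_eq_add_neg (_ * _), exp_add]
  linear_combination
    Real.log lam * phi * exp (Real.log lam * exp (-y ^ phi)) * exp (-y ^ phi) / (lam - 1) * hpow

theorem smptw_lower_partial_moment_general (lam phi : ℝ)
    (hphi : 0 < phi)
    (t : ℝ) (ht : 0 < t) :
    ∫ y in (0 : ℝ)..t, y * smptwPDF lam phi y =
      (Real.log lam / (lam - 1)) *
        ∑' j : ℕ,
          ((Real.log lam) ^ j /
              ((j.factorial : ℝ) * ((j : ℝ) + 1) ^ (1 + 1 / phi))) *
            ∫ v in (0 : ℝ)..(((j : ℝ) + 1) * t ^ phi),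
              v ^ (1 / phi) * Real.exp (-v) := by
  set L := Real.log lam
  have hrpow := Real.continuous_rpow_const hphi.le
  have hseries := hasSum_intervalIntegral_mul_exp
    (g := fun y ↦ L / (lam - 1) * (phi * y ^ phi * exp (-y ^ phi)))
    (h := fun y ↦ L * exp (-y ^ phi)) (by fun_prop) (by fun_prop) 0 t
  have hterm (j : ℕ) (y : ℝ) :
      L / (lam - 1) * (phi * y ^ phi * exp (-y ^ phi)) * ((L * exp (-y ^ phi)) ^ j / j !) =
        L / (lam - 1) * (L ^ j / j !) * (phi * y ^ phi * exp (-((j + 1) * y ^ phi))) := by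
    rw [mul_pow, ← exp_nat_mul, show -((j + 1) * y ^ phi) = j * -y ^ phi + -y ^ phi by ring,
      exp_add]
    ring
  rw [intervalIntegral.integral_congr_ae (.of_forall fun y hy ↦
      mul_smptwPDF (uIoc_of_le ht.le ▸ hy).1), ← hseries.tsum_eq, ← tsum_mul_left]
  refine tsum_congr fun j ↦ ?_
  have hj : (0 : ℝ) < j + 1 := by positivity
  simp only [hterm, intervalIntegral.integral_const_mul,
    integral_rpow_mul_exp_neg_eq hphi hj ht.le]
  generalize ∫ y in (0 : ℝ)..t, phi * y ^ phi * exp (-((j + 1) * y ^ phi)) = I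
  field_simp

/-- the lower partial first moment of the SMPtW distribution
(appearing in the mean waiting time). -/
theorem smptw_lower_partial_moment (lam phi : ℝ)
    (hlam : 0 < lam) (hlam1 : lam ≠ 1) (hphi : 0 < phi)
    (t : ℝ) (ht : 0 < t) :
    ∫ y in (0 : ℝ)..t, y * smptwPDF lam phi y =
      (Real.log lam / (lam - 1)) *
        ∑' j : ℕ,
          ((Real.log lam) ^ j /
              ((j.factorial : ℝ) * ((j : ℝ) + 1) ^ (1 + 1 / phi))) *
            ∫ v in (0 : ℝ)..(((j : ℝ) + 1) * t ^ phi),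
              v ^ (1 / phi) * Real.exp (-v) :=
  smptw_lower_partial_moment_general lam phi hphi t ht
end

section
/- For all real parameters λ > 0 with λ ≠ 1 and φ > 0, and every t > 0, the upper partial first moment of the SMPtW distribution satisfies ∫_t^∞ y · f(y) dy = ((log λ)/(λ − 1)) · Σ_{j=0}^∞ ( (log λ)^j / (j! · (j + 1)^(1 + 1/φ)) ) · ∫_{(j+1)·t^φ}^∞ v^(1/φ) · exp(−v) dv, where f is the SMPtW density. -/
/-! With `L = log λ`, the substitution `u = y ^ φ` turns the partial moment into
`L / (λ - 1) * ∫_{t^φ}^∞ u ^ (1/φ) * exp (L * exp (-u) - u) du`. Expanding `exp (L * exp (-u))`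
as a power series, the `j`-th term `L ^ j / j! * ∫ u ^ (1/φ) * exp (-(j + 1) u)` is bounded in norm by
`|L| ^ j / j! * Γ(1 + 1/φ)`, so the series integrates termwise, and `v = (j + 1) u` turns each
term into an upper incomplete gamma integral. -/

open Real MeasureTheory

open Set

theorem hasSum_pow_div_factorial_exp (x : ℝ) :
    HasSum (fun n : ℕ => x ^ n / n.factorial) (exp x) := by
  rw [exp_eq_exp_ℝ]
  exact NormedSpace.expSeries_div_hasSum_exp x

section IncompleteGamma

variable {a : ℝ}

theorem integrableOn_rpow_mul_exp_neg_mul_Ioi (ha : -1 < a) {s c : ℝ} (hs : 0 ≤ s)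
    (hc : 0 < c) : IntegrableOn (fun u : ℝ => u ^ a * exp (-(c * u))) (Ioi s) := by
  have h := integrableOn_rpow_mul_exp_neg_mul_rpow ha one_pos hc
  simp only [rpow_one, neg_mul] at h
  exact h.mono_set (Ioi_subset_Ioi hs)

theorem setIntegral_Ioi_mul_rpow_mul_exp_neg {s c : ℝ} (hs : 0 ≤ s) (hc : 0 < c) :
    ∫ v in Ioi (c * s), v ^ a * exp (-v) =
      c ^ (a + 1) * ∫ u in Ioi s, u ^ a * exp (-(c * u)) := by
  rw [← integral_comp_mul_left_Ioi' _ _ hc, smul_eq_mul, rpow_add_one hc.ne',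
    ← integral_const_mul, ← integral_const_mul]
  refine setIntegral_congr_fun measurableSet_Ioi fun u hu => ?_
  rw [mul_rpow hc.le (hs.trans (le_of_lt hu))]
  ring

theorem rpow_mul_exp_neg_mul_le {u c : ℝ} (hu : 0 ≤ u) (hc : 1 ≤ c) :
    u ^ a * exp (-(c * u)) ≤ u ^ a * exp (-u) := by
  gcongr
  nlinarith

theorem hasSum_rpow_mul_exp_neg_mul (u L : ℝ) :
    HasSum (fun j : ℕ => L ^ j / j.factorial * (u ^ a * exp (-((j + 1) * u))))
      (u ^ a * exp (L * exp (-u) - u)) := by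
  have h_term : ∀ j : ℕ, L ^ j / j.factorial * (u ^ a * exp (-((j + 1) * u))) =
      u ^ a * exp (-u) * ((L * exp (-u)) ^ j / j.factorial) := by
    intro j
    have : exp (-((j + 1) * u)) = exp (-u) * exp (-u) ^ j := by
      rw [← exp_nat_mul, ← exp_add]
      ring_nf
    rw [this, mul_pow]
    ring
  rw [funext h_term, sub_eq_add_neg, exp_add, mul_comm (exp _), ← mul_assoc]
  exact (hasSum_pow_div_factorial_exp _).mul_left _

theorem setIntegral_Ioi_rpow_mul_exp_mul_exp_neg (ha : -1 < a) {s : ℝ} (hs : 0 ≤ s) (L : ℝ) :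
    ∫ u in Ioi s, u ^ a * exp (L * exp (-u) - u) =
      ∑' j : ℕ, L ^ j / j.factorial * ∫ u in Ioi s, u ^ a * exp (-((j + 1) * u)) := by
  set F : ℕ → ℝ → ℝ := fun j u => L ^ j / j.factorial * (u ^ a * exp (-((j + 1) * u)))
  have h_one_le : ∀ j : ℕ, (1 : ℝ) ≤ j + 1 := fun j => by simp
  have hF_int : ∀ j, Integrable (F j) (volume.restrict (Ioi s)) := fun j =>
    (integrableOn_rpow_mul_exp_neg_mul_Ioi ha hs (by positivity)).const_mul _
  have hF_norm : ∀ j, ∫ u in Ioi s, ‖F j u‖ ≤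
      |L| ^ j / j.factorial * ∫ u in Ioi s, u ^ a * exp (-u) := by
    intro j
    rw [← integral_const_mul]
    have h_dom : IntegrableOn (fun u : ℝ => u ^ a * exp (-u)) (Ioi s) := by
      simpa using integrableOn_rpow_mul_exp_neg_mul_Ioi ha hs one_pos
    refine setIntegral_mono_on (hF_int j).norm (h_dom.const_mul _) measurableSet_Ioi
      fun u hu => ?_
    have hu : 0 ≤ u := hs.trans (le_of_lt hu)
    rw [norm_mul, norm_div, norm_pow, Real.norm_natCast, Real.norm_eq_abs,
      Real.norm_of_nonneg (by positivity)]
    exact mul_le_mul_of_nonneg_left (rpow_mul_exp_neg_mul_le hu (h_one_le j)) (by positivity)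
  have hF_summable : Summable fun j => ∫ u in Ioi s, ‖F j u‖ :=
    ((summable_pow_div_factorial |L|).mul_right _).of_nonneg_of_le
      (fun j => integral_nonneg fun u => norm_nonneg _) hF_norm
  calc ∫ u in Ioi s, u ^ a * exp (L * exp (-u) - u)
      = ∫ u in Ioi s, ∑' j, F j u :=
        setIntegral_congr_fun measurableSet_Ioi fun u _ =>
          (hasSum_rpow_mul_exp_neg_mul u L).tsum_eq.symm
    _ = ∑' j, ∫ u in Ioi s, F j u :=
        (integral_tsum_of_summable_integral_norm hF_int hF_summable).symm
    _ = _ := by simp only [F, integral_const_mul]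

end IncompleteGamma

theorem smptw_upper_partial_moment_general (lam phi : ℝ)
    (hphi : 0 < phi)
    (t : ℝ) (ht : 0 < t) :
    ∫ y in Set.Ioi t, y * smptwPDF lam phi y =
      (Real.log lam / (lam - 1)) *
        ∑' j : ℕ,
          ((Real.log lam) ^ j /
              ((j.factorial : ℝ) * ((j : ℝ) + 1) ^ (1 + 1 / phi))) *
            ∫ v in Set.Ioi (((j : ℝ) + 1) * t ^ phi),
              v ^ (1 / phi) * Real.exp (-v) := by
  set L := log lam
  set G : ℝ → ℝ := fun u => u ^ (1 / phi) * exp (L * exp (-u) - u)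
  have ha : -1 < 1 / phi := neg_one_lt_zero.trans (one_div_pos.mpr hphi)
  have hts : 0 ≤ t ^ phi := by positivity
  have h_subst : ∫ y in Ioi t, y * smptwPDF lam phi y =
      L / (lam - 1) *
        ∫ y in Ioi ((t ^ phi) ^ phi⁻¹), (phi * y ^ (phi - 1)) • G (y ^ phi) := by
    rw [rpow_rpow_inv ht.le hphi.ne', ← integral_const_mul]
    refine setIntegral_congr_fun measurableSet_Ioi fun y hy => ?_
    simp only [G, smptwPDF, smul_eq_mul, one_div, rpow_rpow_inv (ht.trans hy).le hphi.ne']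
    ring
  rw [h_subst, integral_comp_rpow_Ioi_of_pos' hphi hts,
    setIntegral_Ioi_rpow_mul_exp_mul_exp_neg ha hts]
  congr 1
  refine tsum_congr fun j => ?_
  have hc : (0 : ℝ) < j + 1 := by positivity
  rw [setIntegral_Ioi_mul_rpow_mul_exp_neg hts hc, add_comm (1 / phi)]
  have h_pow : ((j : ℝ) + 1) ^ (1 + 1 / phi) ≠ 0 := (rpow_pos_of_pos hc _).ne'
  field_simp

/-- the upper partial first moment of the SMPtW distribution
(appearing in the mean residual life). -/
theorem smptw_upper_partial_moment (lam phi : ℝ)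
    (hlam : 0 < lam) (hlam1 : lam ≠ 1) (hphi : 0 < phi)
    (t : ℝ) (ht : 0 < t) :
    ∫ y in Set.Ioi t, y * smptwPDF lam phi y =
      (Real.log lam / (lam - 1)) *
        ∑' j : ℕ,
          ((Real.log lam) ^ j /
              ((j.factorial : ℝ) * ((j : ℝ) + 1) ^ (1 + 1 / phi))) *
            ∫ v in Set.Ioi (((j : ℝ) + 1) * t ^ phi),
              v ^ (1 / phi) * Real.exp (-v) :=
  smptw_upper_partial_moment_general lam phi hphi t ht
end
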